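/- arXiv:1603.03298 — 2 statements merged into one kernel-verified Lean document; each statement's English description precedes it below -/
import Mathlib

section
/- The Kasteleyn product ∏_{m=1}^{3} ∏_{k=1}^{3} (4 cos²(mπ/7) + 4 cos²(kπ/7)) equals 6728. -/
open Real

private lemma cos_seven_mul (θ : ℝ) :
    Real.cos (7 * θ) = 64 * Real.cos θ ^ 7 - 112 * Real.cos θ ^ 5 + 56 * Real.cos θ ^ 3
      - 7 * Real.cos θ := by
  have h7 : (7 : ℝ) * θ = 3 * (2 * θ) + θ := by ring
  rw [h7, Real.cos_add, Real.cos_three_mul, Real.sin_three_mul, Real.cos_two_mul,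
    Real.sin_two_mul]
  have hs : Real.sin θ ^ 2 = 1 - Real.cos θ ^ 2 := Real.sin_sq θ
  linear_combination (-6 * Real.cos θ + 32 * Real.cos θ ^ 3 *
    (Real.sin θ ^ 2 + 1 - Real.cos θ ^ 2)) * hs

set_option maxHeartbeats 1000000 in
theorem kasteleyn_six_six :
    (∏ m ∈ Finset.Icc (1 : ℕ) 3, ∏ k ∈ Finset.Icc (1 : ℕ) 3,
      (4 * Real.cos ((m : ℝ) * π / 7) ^ 2 + 4 * Real.cos ((k : ℝ) * π / 7) ^ 2)) = 6728 := by
  have hpi := Real.pi_pos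
  set x1 := Real.cos (1 * π / 7) with hx1
  set x2 := Real.cos (2 * π / 7) with hx2
  set x3 := Real.cos (3 * π / 7) with hx3
  -- cubic for x1
  have hc1 : Real.cos (7 * (1 * π / 7)) = -1 := by
    have : (7 : ℝ) * (1 * π / 7) = π := by ring
    rw [this, Real.cos_pi]
  have hc2 : Real.cos (7 * (2 * π / 7)) = 1 := by
    have : (7 : ℝ) * (2 * π / 7) = 2 * π := by ring
    rw [this, Real.cos_two_pi]
  have hc3 : Real.cos (7 * (3 * π / 7)) = -1 := by
    have : (7 : ℝ) * (3 * π / 7) = 2 * π + π := by ring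
    rw [this, Real.cos_add, Real.cos_two_pi, Real.sin_two_pi, Real.cos_pi]
    ring
  have hT1 := cos_seven_mul (1 * π / 7)
  have hT2 := cos_seven_mul (2 * π / 7)
  have hT3 := cos_seven_mul (3 * π / 7)
  rw [hc1, ← hx1] at hT1
  rw [hc2, ← hx2] at hT2
  rw [hc3, ← hx3] at hT3
  -- positivity / bounds
  have h1pos : 0 < x1 := Real.cos_pos_of_mem_Ioo (by constructor <;> nlinarith)
  have h3pos : 0 < x3 := Real.cos_pos_of_mem_Ioo (by constructor <;> nlinarith)
  have h2lt1 : x2 < 1 := by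
    have := Real.cos_lt_cos_of_nonneg_of_le_pi (le_refl 0) (by nlinarith) (by nlinarith :
      (0:ℝ) < 2 * π / 7)
    simpa using this
  have h21 : x2 < x1 := Real.cos_lt_cos_of_nonneg_of_le_pi (by positivity) (by nlinarith)
    (by nlinarith)
  have h32 : x3 < x2 := Real.cos_lt_cos_of_nonneg_of_le_pi (by positivity) (by nlinarith)
    (by nlinarith)
  -- factor: T7(x)+1 = (x+1)(8x^3-4x^2-4x+1)^2, T7(x)-1 = (x-1)(8x^3+4x^2-4x-1)^2
  have hp1 : 8 * x1 ^ 3 - 4 * x1 ^ 2 - 4 * x1 + 1 = 0 := by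
    have hf : (x1 + 1) * (8 * x1 ^ 3 - 4 * x1 ^ 2 - 4 * x1 + 1) ^ 2 = 0 := by
      linear_combination -hT1
    have hne : x1 + 1 ≠ 0 := by positivity
    have := (mul_eq_zero.mp hf).resolve_left hne
    exact pow_eq_zero_iff (by norm_num) |>.mp this
  have hp2 : 8 * x2 ^ 3 + 4 * x2 ^ 2 - 4 * x2 - 1 = 0 := by
    have hf : (x2 - 1) * (8 * x2 ^ 3 + 4 * x2 ^ 2 - 4 * x2 - 1) ^ 2 = 0 := by
      linear_combination -hT2
    have hne : x2 - 1 ≠ 0 := by nlinarith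
    have := (mul_eq_zero.mp hf).resolve_left hne
    exact pow_eq_zero_iff (by norm_num) |>.mp this
  have hp3 : 8 * x3 ^ 3 - 4 * x3 ^ 2 - 4 * x3 + 1 = 0 := by
    have hf : (x3 + 1) * (8 * x3 ^ 3 - 4 * x3 ^ 2 - 4 * x3 + 1) ^ 2 = 0 := by
      linear_combination -hT3
    have hne : x3 + 1 ≠ 0 := by positivity
    have := (mul_eq_zero.mp hf).resolve_left hne
    exact pow_eq_zero_iff (by norm_num) |>.mp this
  -- a, b, c := 4 cos^2
  set a := 4 * x1 ^ 2 with hadef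
  set b := 4 * x2 ^ 2 with hbdef
  set c := 4 * x3 ^ 2 with hcdef
  have ha : a ^ 3 - 5 * a ^ 2 + 6 * a - 1 = 0 := by
    rw [hadef]; linear_combination (8 * x1 ^ 3 + 4 * x1 ^ 2 - 4 * x1 - 1) * hp1
  have hb : b ^ 3 - 5 * b ^ 2 + 6 * b - 1 = 0 := by
    rw [hbdef]; linear_combination (8 * x2 ^ 3 - 4 * x2 ^ 2 - 4 * x2 + 1) * hp2
  have hcq : c ^ 3 - 5 * c ^ 2 + 6 * c - 1 = 0 := by
    rw [hcdef]; linear_combination (8 * x3 ^ 3 + 4 * x3 ^ 2 - 4 * x3 - 1) * hp3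
  -- distinctness
  have hab : a ≠ b := by
    rw [hadef, hbdef]; intro h; nlinarith
  have hbc : b ≠ c := by
    rw [hbdef, hcdef]; intro h; nlinarith
  have hac : a ≠ c := by
    rw [hadef, hcdef]; intro h; nlinarith
  -- symmetric functions
  have habq : a ^ 2 + a * b + b ^ 2 - (5 * (a + b) - 6) = 0 := by
    have h0 : (a - b) * (a ^ 2 + a * b + b ^ 2 - (5 * (a + b) - 6)) = 0 := by
      linear_combination ha - hb
    exact (mul_eq_zero.mp h0).resolve_left (sub_ne_zero.mpr hab)
  have hbcq : b ^ 2 + b * c + c ^ 2 - (5 * (b + c) - 6) = 0 := by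
    have h0 : (b - c) * (b ^ 2 + b * c + c ^ 2 - (5 * (b + c) - 6)) = 0 := by
      linear_combination hb - hcq
    exact (mul_eq_zero.mp h0).resolve_left (sub_ne_zero.mpr hbc)
  have he1 : a + b + c = 5 := by
    have h0 : (a - c) * (a + b + c - 5) = 0 := by linear_combination habq - hbcq
    have := (mul_eq_zero.mp h0).resolve_left (sub_ne_zero.mpr hac)
    linarith
  have he2 : a * b + b * c + c * a = 6 := by
    linear_combination (a + b) * he1 - habq
  have he3 : a * b * c = 1 := by
    linear_combination c * he2 - c ^ 2 * he1 + hcq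
  -- expand product
  have hIcc : Finset.Icc (1 : ℕ) 3 = {1, 2, 3} := by decide
  rw [hIcc]
  repeat (first
    | rw [Finset.prod_insert (by decide)]
    | rw [Finset.prod_singleton])
  push_cast
  rw [← hx1, ← hx2, ← hx3]
  have key : (4 * x1 ^ 2 + 4 * x1 ^ 2) * ((4 * x1 ^ 2 + 4 * x2 ^ 2) * (4 * x1 ^ 2 + 4 * x3 ^ 2)) *
      ((4 * x2 ^ 2 + 4 * x1 ^ 2) * ((4 * x2 ^ 2 + 4 * x2 ^ 2) * (4 * x2 ^ 2 + 4 * x3 ^ 2)) *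
      ((4 * x3 ^ 2 + 4 * x1 ^ 2) * ((4 * x3 ^ 2 + 4 * x2 ^ 2) * (4 * x3 ^ 2 + 4 * x3 ^ 2)))) =
      8 * (a * b * c) * ((a + b + c) * (a * b + b * c + c * a) - a * b * c) ^ 2 := by
    rw [hadef, hbdef, hcdef]; ring
  rw [key, he1, he2, he3]
  norm_num
end

section
/- Every domino tiling of the 6×6 chessboard has a fault line: a horizontal or vertical line through the interior of the board that does not cut through any domino. -/
/-- Two cells of an `m × n` board are edge-adjacent. -/
def DominoAdj {m n : ℕ} (a b : Fin m × Fin n) : Prop :=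
  ((a.1 : ℕ) = b.1 ∧ ((a.2 : ℕ) + 1 = b.2 ∨ (b.2 : ℕ) + 1 = a.2)) ∨
  ((a.2 : ℕ) = b.2 ∧ ((a.1 : ℕ) + 1 = b.1 ∨ (b.1 : ℕ) + 1 = a.1))

instance {m n : ℕ} (a b : Fin m × Fin n) : Decidable (DominoAdj a b) := by
  unfold DominoAdj; infer_instance

/-- A domino tiling of the `m × n` board, encoded as a fixed-point-free involution
pairing each cell with the edge-adjacent cell covered by the same domino. -/
def IsDominoTiling {m n : ℕ} (f : Fin m × Fin n → Fin m × Fin n) : Prop :=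
  ∀ c, f (f c) = c ∧ DominoAdj c (f c)

instance {m n : ℕ} : DecidablePred (@IsDominoTiling m n) := fun f => by
  unfold IsDominoTiling; infer_instance

/-- The number of domino tilings of the `m × n` board. -/
def numDominoTilings (m n : ℕ) : ℕ :=
  Fintype.card {f : Fin m × Fin n → Fin m × Fin n // IsDominoTiling f}

/-!
A domino straddling a grid line occupies one cell on each side of it. On a board whose rows have
even length, the cells below a horizontal line are even in number, and those of them not paired
across the line are paired among themselves; hence every horizontal line is straddled by an even
number of dominoes, so by at least two unless it is a fault line. The same holds for vertical
lines. Without a fault line the 6 × 6 board would thus need at least `2 · 5 + 2 · 5 = 20`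
dominoes, but it has only 18.
-/

open Finset

theorem Finset.even_card_of_involution {α : Type*} {s : Finset α} (g : α → α)
    (hg : ∀ a ∈ s, g a ∈ s) (hinv : ∀ a ∈ s, g (g a) = a) (hne : ∀ a ∈ s, g a ≠ a) :
    Even #s := by
  rw [← ZMod.natCast_eq_zero_iff_even, card_eq_sum_ones, Nat.cast_sum, Nat.cast_one]
  exact sum_involution (fun a _ => g a) (fun _ _ => by decide) (fun a ha _ => hne a ha) hg hinv

variable {m n : ℕ} {f : Fin m × Fin n → Fin m × Fin n}

def transposeTiling (f : Fin m × Fin n → Fin m × Fin n) : Fin n × Fin m → Fin n × Fin m :=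
  Prod.swap ∘ f ∘ Prod.swap

/-- Each vertical domino is represented by its cell of smaller row index. -/
def verticalDominoes (f : Fin m × Fin n → Fin m × Fin n) : Finset (Fin m × Fin n) :=
  {c | (c.1 : ℕ) + 1 = (f c).1}

/-- Grid line `k` runs between rows `k - 1` and `k`. -/
def straddlers (f : Fin m × Fin n → Fin m × Fin n) (k : ℕ) : Finset (Fin m × Fin n) :=
  {c | (c.1 : ℕ) < k ∧ k ≤ (f c).1}

theorem straddlers_eq_empty_iff {k : ℕ} :
    straddlers f k = ∅ ↔ ∀ c : Fin m × Fin n, (c.1 : ℕ) < k → ((f c).1 : ℕ) < k := by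
  simp [straddlers, filter_eq_empty_iff]

namespace IsDominoTiling

theorem transpose (hf : IsDominoTiling f) : IsDominoTiling (transposeTiling f) := by
  intro c
  refine ⟨by simp [transposeTiling, (hf c.swap).1], ?_⟩
  have h := (hf c.swap).2
  simp only [DominoAdj, transposeTiling, Function.comp_apply, Prod.fst_swap,
    Prod.snd_swap] at h ⊢
  tauto

theorem mem_straddlers_iff (hf : IsDominoTiling f) {k : ℕ} {c : Fin m × Fin n} :
    c ∈ straddlers f k ↔ (c.1 : ℕ) + 1 = k ∧ ((f c).1 : ℕ) = k := by
  have h := (hf c).2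
  simp only [straddlers, mem_filter, mem_univ, true_and]
  unfold DominoAdj at h
  omega

theorem card_verticalDominoes (hf : IsDominoTiling f) :
    #(verticalDominoes f) = ∑ k ∈ Ico 1 m, #(straddlers f k) := by
  rw [card_eq_sum_card_fiberwise (f := fun c => (c.1 : ℕ) + 1) (t := Ico 1 m)]
  · refine sum_congr rfl fun k _ => congrArg card (ext fun c => ?_)
    simp only [verticalDominoes, mem_filter, mem_univ, true_and, hf.mem_straddlers_iff]
    omega
  · intro c hc
    have := ((f c).1).isLt
    simp only [verticalDominoes, coe_filter, Set.mem_ofPred_eq, mem_coe, mem_Ico] at hc ⊢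
    omega

theorem even_card_straddlers (hf : IsDominoTiling f) (hn : Even n) {k : ℕ} (hk : k ≤ m) :
    Even #(straddlers f k) := by
  set below : Finset (Fin m × Fin n) := {c | (c.1 : ℕ) < k}
  have hbelow : #below = k * n := by
    rw [show below = ({i : Fin m | (i : ℕ) < k} : Finset (Fin m)) ×ˢ univ by ext; simp [below],
      card_product, Fin.card_filter_val_lt, card_univ, Fintype.card_fin, min_eq_right hk]
  have hsplit := card_filter_add_card_filter_not (s := below) (fun c => ((f c).1 : ℕ) < k)
  have hpaired : Even #(below.filter fun c => ((f c).1 : ℕ) < k) := by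
    refine even_card_of_involution f (fun c hc => ?_) (fun c _ => (hf c).1) (fun c _ h => ?_)
    · simp only [below, mem_filter, mem_univ, true_and] at hc ⊢
      exact ⟨hc.2, by rw [(hf c).1]; exact hc.1⟩
    · have h' := (hf c).2
      rw [h] at h'
      unfold DominoAdj at h'
      omega
  have hcross : below.filter (fun c => ¬ ((f c).1 : ℕ) < k) = straddlers f k := by
    ext c; simp [below, straddlers]
  rw [hcross, hbelow] at hsplit
  exact (Nat.even_add.mp (hsplit ▸ hn.mul_left k)).mp hpaired

theorem two_le_card_straddlers (hf : IsDominoTiling f) (hn : Even n) {k : ℕ} (hk : k ≤ m)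
    (hcross : (straddlers f k).Nonempty) : 2 ≤ #(straddlers f k) := by
  obtain ⟨r, hr⟩ := hf.even_card_straddlers hn hk
  have := card_pos.mpr hcross
  omega

theorem two_mul_pred_le_card_verticalDominoes (hf : IsDominoTiling f) (hn : Even n)
    (hcross : ∀ k, 1 ≤ k → k < m → (straddlers f k).Nonempty) :
    2 * (m - 1) ≤ #(verticalDominoes f) := by
  rw [hf.card_verticalDominoes]
  calc 2 * (m - 1) = ∑ _k ∈ Ico 1 m, 2 := by simp [mul_comm]
    _ ≤ _ := sum_le_sum fun k hk => by
      rw [mem_Ico] at hk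
      exact hf.two_le_card_straddlers hn hk.2.le (hcross k hk.1 hk.2)

/-- The horizontal dominoes are the vertical dominoes of the transposed tiling. -/
theorem two_mul_card_dominoes (hf : IsDominoTiling f) :
    2 * (#(verticalDominoes f) + #(verticalDominoes (transposeTiling f))) = m * n := by
  have hhoriz : #(verticalDominoes (transposeTiling f)) =
      #({c | (c.2 : ℕ) + 1 = (f c).2} : Finset (Fin m × Fin n)) :=
    card_equiv (Equiv.prodComm _ _) fun c => by
      simp only [verticalDominoes, mem_filter_univ]
      rfl
  set forward : Finset (Fin m × Fin n) :=
    {c | (c.1 : ℕ) + 1 = (f c).1 ∨ (c.2 : ℕ) + 1 = (f c).2}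
  have hforward : #forward = #(verticalDominoes f) + #(verticalDominoes (transposeTiling f)) := by
    rw [hhoriz, ← card_union_of_disjoint, verticalDominoes, ← filter_or]
    refine disjoint_filter.mpr fun c _ h₁ h₂ => ?_
    have h := (hf c).2
    unfold DominoAdj at h
    omega
  -- `f` exchanges the two cells of each domino, hence `forward` and its complement.
  have hflip (c : Fin m × Fin n) : c ∈ forward ↔ f c ∉ forward := by
    have h := (hf c).2
    simp only [forward, mem_filter, mem_univ, true_and, (hf c).1]
    unfold DominoAdj at h
    omega
  have hcompl : #forward = #forwardᶜ :=
    card_nbij' f f (fun c hc => by simpa using (hflip c).mp hc)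
      (fun c hc => mem_coe.mpr ((hflip (f c)).mpr (by simpa [(hf c).1] using hc)))
      (fun c _ => (hf c).1) (fun c _ => (hf c).1)
  have htotal := card_add_card_compl forward
  rw [Fintype.card_prod, Fintype.card_fin, Fintype.card_fin] at htotal
  omega

theorem exists_straddlers_eq_empty (hf : IsDominoTiling f) (hm : Even m) (hn : Even n)
    (hmn : m * n < 4 * (m + n - 2)) :
    (∃ k, 1 ≤ k ∧ k < m ∧ straddlers f k = ∅) ∨
      ∃ k, 1 ≤ k ∧ k < n ∧ straddlers (transposeTiling f) k = ∅ := by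
  by_contra! h
  have hrows := hf.two_mul_pred_le_card_verticalDominoes hn h.1
  have hcols := hf.transpose.two_mul_pred_le_card_verticalDominoes hm h.2
  have htotal := hf.two_mul_card_dominoes
  omega

end IsDominoTiling

theorem straddlers_transposeTiling_eq_empty_iff {k : ℕ} :
    straddlers (transposeTiling f) k = ∅ ↔
      ∀ c : Fin m × Fin n, (c.2 : ℕ) < k → ((f c).2 : ℕ) < k := by
  rw [straddlers_eq_empty_iff]
  simp only [transposeTiling, Function.comp_apply, Prod.forall, Prod.fst_swap, Prod.swap_prod_mk]
  exact forall_comm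

/-- Every domino tiling of the 6×6 board has a fault line: a horizontal or vertical
grid line at distance `k` (1 ≤ k ≤ 5) from an edge that no domino straddles. -/
theorem six_six_fault_line (f : Fin 6 × Fin 6 → Fin 6 × Fin 6)
    (hf : IsDominoTiling f) :
    ∃ k : ℕ, 1 ≤ k ∧ k ≤ 5 ∧
      ((∀ c : Fin 6 × Fin 6, (c.1 : ℕ) < k → ((f c).1 : ℕ) < k) ∨
       (∀ c : Fin 6 × Fin 6, (c.2 : ℕ) < k → ((f c).2 : ℕ) < k)) := by
  rcases hf.exists_straddlers_eq_empty (by decide) (by decide) (by norm_num) with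
    ⟨k, hk1, hk, hfault⟩ | ⟨k, hk1, hk, hfault⟩
  · exact ⟨k, hk1, by omega, .inl (straddlers_eq_empty_iff.mp hfault)⟩
  · exact ⟨k, hk1, by omega, .inr (straddlers_transposeTiling_eq_empty_iff.mp hfault)⟩
end
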